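/- arXiv:2012.08480 — 4 statements merged into one kernel-verified Lean document; each statement's English description precedes it below -/
import Mathlib

section
/- Let π, P, δ ∈ A = F_q[t] with P monic irreducible of degree d, gcd(π,P)=1, δ | π, gcd(δ, π/δ)=1. Choose α, β ∈ A with α(π/δ)P² + βδ = 1. Then: (a) the map Q ↦ Q' sending Q (with deg Q < d) to the unique Q' with deg Q' < d and Q ≡ βQ' mod P is a bijection on {Q ∈ A : deg Q < d}; (b) for each such Q, the matrix identity [[1,Q],[0,P]] · [[βδ, −αP],[πP, δ]] = [[δ(β + (π/δ)PQ), δ(Q−βQ')/P − πQQ' − α],[πP², δ(1 − (π/δ)PQ')]] · [[1,Q'],[0,P]] holds, with all entries of the first matrix on the right in A, and that matrix has determinant δ and is an Atkin–Lehner matrix W_{(δ)}^{(π)}. -/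
open Matrix

noncomputable section

/-- `Γ₀(ν)`: matrices over `F_q[t]` with unit determinant whose lower-left entry
is divisible by `ν`. -/
def Gamma0 {Fq : Type} [Field Fq] (ν : Polynomial Fq) :
    Set (Matrix (Fin 2) (Fin 2) (Polynomial Fq)) :=
  {γ | IsUnit γ.det ∧ ν ∣ γ 1 0}

/-- Möbius (fractional linear) action of a matrix over `F_q[t]` on `C_∞`. -/
def moeb {Fq Coo : Type} [Field Fq] [Field Coo] (ι : Polynomial Fq →+* Coo)
    (M : Matrix (Fin 2) (Fin 2) (Polynomial Fq)) (z : Coo) : Coo :=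
  (ι (M 0 0) * z + ι (M 0 1)) / (ι (M 1 0) * z + ι (M 1 1))

/-- Weight-`k`, type-`m` slash operator. -/
def slash {Fq Coo : Type} [Field Fq] [Field Coo] (ι : Polynomial Fq →+* Coo)
    (k m : ℤ) (M : Matrix (Fin 2) (Fin 2) (Polynomial Fq)) (f : Coo → Coo) : Coo → Coo :=
  fun z => f (moeb ι M z) * ι M.det ^ m * (ι (M 1 0) * z + ι (M 1 1)) ^ (-k)

/-- Weak modularity: invariance of `f` under the slash action of `Γ₀(ν)`. -/
def IsWeakModular {Fq Coo : Type} [Field Fq] [Field Coo] (ι : Polynomial Fq →+* Coo)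
    (k m : ℤ) (ν : Polynomial Fq) (f : Coo → Coo) : Prop :=
  ∀ γ ∈ Gamma0 ν, slash ι k m γ f = f

/-- The operator `U_p`: `U_P(f) = P^{k-m} Σ_{deg Q < deg P} f|_{k,m}[[1,Q],[0,P]]`,
where the sum over polynomials `Q` of degree `< d = deg P` is indexed by their
coefficient tuples. -/
def heckeU {Fq Coo : Type} [Field Fq] [Fintype Fq] [Field Coo] (ι : Polynomial Fq →+* Coo)
    (k m : ℤ) (P : Polynomial Fq) (f : Coo → Coo) : Coo → Coo :=
  fun z => ι P ^ (k - m) *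
    ∑ c : Fin P.natDegree → Fq,
      slash ι k m
        !![1, ∑ i : Fin P.natDegree, Polynomial.C (c i) * Polynomial.X ^ (i : ℕ); 0, P] f z

/-- The Hecke operator `T_p` for `p = (P)` prime to the level. -/
def heckeT {Fq Coo : Type} [Field Fq] [Fintype Fq] [Field Coo] (ι : Polynomial Fq →+* Coo)
    (k m : ℤ) (P : Polynomial Fq) (f : Coo → Coo) : Coo → Coo :=
  fun z => ι P ^ (k - m) * slash ι k m !![P, 0; 0, 1] f z + heckeU ι k m P f z

/-- `W` is an Atkin–Lehner matrix for `d = (δ)` at level `n = (ν)`: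
`W = [[δa, b],[νc, δd]]` with determinant `ζδ`, `ζ ∈ F_q^×`. -/
def IsAL {Fq : Type} [Field Fq] (ν δ : Polynomial Fq)
    (W : Matrix (Fin 2) (Fin 2) (Polynomial Fq)) : Prop :=
  δ ∣ W 0 0 ∧ ν ∣ W 1 0 ∧ δ ∣ W 1 1 ∧ ∃ ζ : Fq, ζ ≠ 0 ∧ W.det = Polynomial.C ζ * δ

/-! Since `βδ = 1 - αρP²`, the polynomials `β` and `δ` are inverse to each other modulo `P`, so
`Q ≡ βQ' (mod P)` says the same as `Q' ≡ δQ (mod P)`. Both `Q ↦ Q'` and `Q' ↦ Q` are therefore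
reductions modulo the monic `P`, whose remainders of degree `< deg P` are unique. After substituting
`π = δρ` and `Q = βQ' + Pe`, the matrix identity is a polynomial identity, and the determinant of
the Atkin–Lehner factor is `δ(βδ + αρP²) = δ`. -/

theorem dvd_sub_mul_iff_of_dvd_mul_sub_one {R : Type*} [CommRing R] {n u v : R}
    (huv : n ∣ u * v - 1) (x y : R) : n ∣ x - u * y ↔ n ∣ y - v * x := by
  constructor
  · intro hx
    convert hx.linear_comb huv (-v) (-y) using 1
    ring
  · intro hy
    convert hy.linear_comb huv (-u) (-x) using 1
    ring

theorem Polynomial.existsUnique_degree_lt_dvd_sub {R : Type*} [CommRing R] [Nontrivial R]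
    {P : Polynomial R} (hP : P.Monic) (a : Polynomial R) :
    ∃! r : Polynomial R, r.degree < P.degree ∧ P ∣ r - a :=
  ⟨a %ₘ P, ⟨degree_modByMonic_lt a hP, dvd_modByMonic_sub a P⟩, fun _ ⟨hr, hdvd⟩ =>
    ((modByMonic_eq_self_iff hP).2 hr).symm.trans (modByMonic_eq_of_dvd_sub hP hdvd)⟩

section AtkinLehnerFactor

variable {R : Type*} [CommRing R] {π P δ ρ α β Q Q' e : R}

/-- The Atkin–Lehner matrix `W_{(δ)}^{(π)}` obtained by moving `[[1, Q], [0, P]]` across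
`[[βδ, -αP], [πP, δ]]`; here `π = δρ` and `Q - βQ' = Pe`. -/
def heckeAtkinLehnerFactor (π P δ ρ α β Q Q' e : R) : Matrix (Fin 2) (Fin 2) R :=
  !![δ * (β + ρ * P * Q), δ * e - π * Q * Q' - α; π * P ^ 2, δ * (1 - ρ * P * Q')]

theorem mul_atkinLehner_eq_heckeAtkinLehnerFactor_mul (hπ : π = δ * ρ)
    (he : Q - β * Q' = P * e) :
    !![1, Q; 0, P] * !![β * δ, -α * P; π * P, δ] =
      heckeAtkinLehnerFactor π P δ ρ α β Q Q' e * !![1, Q'; 0, P] := by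
  obtain rfl : Q = β * Q' + P * e := by linear_combination he
  subst hπ
  rw [heckeAtkinLehnerFactor, mul_fin_two, mul_fin_two]
  ext i j
  fin_cases i <;> fin_cases j <;> dsimp <;> ring

theorem det_heckeAtkinLehnerFactor (hπ : π = δ * ρ) (hαβ : α * ρ * P ^ 2 + β * δ = 1)
    (he : Q - β * Q' = P * e) : (heckeAtkinLehnerFactor π P δ ρ α β Q Q' e).det = δ := by
  obtain rfl : Q = β * Q' + P * e := by linear_combination he
  subst hπ
  rw [heckeAtkinLehnerFactor, det_fin_two_of]
  linear_combination δ * hαβ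

end AtkinLehnerFactor

theorem isAL_heckeAtkinLehnerFactor {Fq : Type} [Field Fq] {π P δ ρ α β Q Q' e : Polynomial Fq}
    (hπ : π = δ * ρ) (hαβ : α * ρ * P ^ 2 + β * δ = 1) (he : Q - β * Q' = P * e) :
    IsAL π δ (heckeAtkinLehnerFactor π P δ ρ α β Q Q' e) :=
  ⟨dvd_mul_right _ _, dvd_mul_right _ _, dvd_mul_right _ _,
    1, one_ne_zero, by rw [det_heckeAtkinLehnerFactor hπ hαβ he, Polynomial.C_1, one_mul]⟩

theorem hecke_atkinLehner_matrix_identity_general {Fq : Type} [Field Fq]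
    (π P δ ρ α β : Polynomial Fq)
    (hP : P.Monic) (hπ : π = δ * ρ)
    (hαβ : α * ρ * P ^ 2 + β * δ = 1) :
    (∀ Q : Polynomial Fq, Q.degree < P.degree →
      ∃! Q' : Polynomial Fq, Q'.degree < P.degree ∧ P ∣ (Q - β * Q')) ∧
    (∀ Q' : Polynomial Fq, Q'.degree < P.degree →
      ∃! Q : Polynomial Fq, Q.degree < P.degree ∧ P ∣ (Q - β * Q')) ∧
    (∀ Q Q' e : Polynomial Fq, Q.degree < P.degree → Q'.degree < P.degree →
      Q - β * Q' = P * e →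
      (!![1, Q; 0, P] : Matrix (Fin 2) (Fin 2) (Polynomial Fq)) * !![β * δ, -α * P; π * P, δ] =
        !![δ * (β + ρ * P * Q), δ * e - π * Q * Q' - α;
           π * P ^ 2, δ * (1 - ρ * P * Q')] * !![1, Q'; 0, P] ∧
      IsAL π δ (!![δ * (β + ρ * P * Q), δ * e - π * Q * Q' - α;
           π * P ^ 2, δ * (1 - ρ * P * Q')] : Matrix (Fin 2) (Fin 2) (Polynomial Fq)) ∧
      (!![δ * (β + ρ * P * Q), δ * e - π * Q * Q' - α;
           π * P ^ 2, δ * (1 - ρ * P * Q')] : Matrix (Fin 2) (Fin 2) (Polynomial Fq)).det = δ) := by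
  have hβδ : P ∣ β * δ - 1 := ⟨-(α * ρ * P), by linear_combination hαβ⟩
  refine ⟨fun Q _ => ?_, fun Q' _ => Polynomial.existsUnique_degree_lt_dvd_sub hP (β * Q'),
    fun Q Q' e _ _ he => ⟨mul_atkinLehner_eq_heckeAtkinLehnerFactor_mul hπ he,
      isAL_heckeAtkinLehnerFactor hπ hαβ he, det_heckeAtkinLehnerFactor hπ hαβ he⟩⟩
  refine (existsUnique_congr fun Q' => ?_).2 (Polynomial.existsUnique_degree_lt_dvd_sub hP (δ * Q))
  exact and_congr_right' (dvd_sub_mul_iff_of_dvd_mul_sub_one hβδ Q Q')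

/-- (a) `Q ↦ Q'` with `deg Q' < deg P` and `Q ≡ βQ' (mod P)` is a
bijection on polynomials of degree `< deg P`; (b) the matrix identity
`[[1,Q],[0,P]] · [[βδ,−αP],[πP,δ]] = M · [[1,Q'],[0,P]]` where
`M = [[δ(β+ρPQ), δe−πQQ'−α],[πP², δ(1−ρPQ')]]` (with `Q−βQ' = Pe`, `π = δρ`)
has entries in `A`, determinant `δ`, and is an Atkin–Lehner matrix `W_{(δ)}^{(π)}`. -/
theorem hecke_atkinLehner_matrix_identity {Fq : Type} [Field Fq] [Fintype Fq]
    (π P δ ρ α β : Polynomial Fq)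
    (hP : P.Monic) (hPirr : Irreducible P) (hcop : IsCoprime π P)
    (hπ : π = δ * ρ) (hcopδ : IsCoprime δ ρ)
    (hαβ : α * ρ * P ^ 2 + β * δ = 1) :
    (∀ Q : Polynomial Fq, Q.degree < P.degree →
      ∃! Q' : Polynomial Fq, Q'.degree < P.degree ∧ P ∣ (Q - β * Q')) ∧
    (∀ Q' : Polynomial Fq, Q'.degree < P.degree →
      ∃! Q : Polynomial Fq, Q.degree < P.degree ∧ P ∣ (Q - β * Q')) ∧
    (∀ Q Q' e : Polynomial Fq, Q.degree < P.degree → Q'.degree < P.degree →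
      Q - β * Q' = P * e →
      (!![1, Q; 0, P] : Matrix (Fin 2) (Fin 2) (Polynomial Fq)) * !![β * δ, -α * P; π * P, δ] =
        !![δ * (β + ρ * P * Q), δ * e - π * Q * Q' - α;
           π * P ^ 2, δ * (1 - ρ * P * Q')] * !![1, Q'; 0, P] ∧
      IsAL π δ (!![δ * (β + ρ * P * Q), δ * e - π * Q * Q' - α;
           π * P ^ 2, δ * (1 - ρ * P * Q')] : Matrix (Fin 2) (Fin 2) (Polynomial Fq)) ∧
      (!![δ * (β + ρ * P * Q), δ * e - π * Q * Q' - α;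
           π * P ^ 2, δ * (1 - ρ * P * Q')] : Matrix (Fin 2) (Fin 2) (Polynomial Fq)).det = δ) :=
  hecke_atkinLehner_matrix_identity_general π P δ ρ α β hP hπ hαβ
end
end

section
/- Let m = (π) and p = (P) be coprime ideals of A = F_q[t] with P monic irreducible of degree d. For f ∈ M_{k,m}(Γ0(m)) and an ideal d = (δ) with δ | π and gcd(δ, π/δ)=1, the Hecke operator T_p commutes with the Atkin–Lehner involution W_d^m: W_d^m(T_p(f)) = T_p(W_d^m(f)). -/
/-!
Write `T_P f = P^{k-m} ∑_R f|R` over the representatives `R = [[P,0],[0,1]]` and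
`R = [[1,Q],[0,P]]`, indexed by the projective line over `A/P`. For each `R` there are a
representative `R'` and a `γ ∈ Γ₀(π)` of determinant one with `R W = γ W R'`, and `R ↦ R'`
is a permutation: modulo `P` both `R` and `adj R'` have rank one, so `R W adj R' ≡ 0` says
that the row of `R` is orthogonal to `W` times the column of `adj R'`, which is a bijection of
`P¹(A/P)` because `W` is invertible modulo `P`. Integrality at `δ` and `π ∣ γ₁₀` come from the
shape of `W`. Then `(f|R)|W = f|γWR' = (f|W)|R'`, and the two sums agree.

Since `f` is an arbitrary function on `C_∞`, the slash operators also take junk values at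
poles. They are compared through the homogeneous lift `F(n, e) = f(n/e) e^{-k}`, which is
`Γ₀(π)`-invariant at every point, including `e = 0`. When `ι P = 0` every term of `T_P` is
constant and the claim reduces to `f(W·0) = f(0)` in weight zero.
-/

open Matrix

noncomputable section

open Polynomial

section HomogeneousLift

variable {K : Type*} [Field K]

/-- At `v 1 = 0` this is `f 0 * 0 ^ (-k)`, the junk value of a slash operator at a pole, so
that `slash_apply_eq_homLift` holds everywhere. -/
def homLift (k : ℤ) (f : K → K) (v : Fin 2 → K) : K := f (v 0 / v 1) * v 1 ^ (-k)

variable {k : ℤ} {f : K → K}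

lemma homLift_vecCons_one (x : K) : homLift k f ![x, 1] = f x := by
  simp [homLift]

lemma homLift_smul {c : K} (hc : c ≠ 0) (v : Fin 2 → K) :
    homLift k f (c • v) = c ^ (-k) * homLift k f v := by
  simp only [homLift, Pi.smul_apply, smul_eq_mul, mul_div_mul_left _ _ hc, mul_zpow]
  ring

lemma homLift_of_snd_eq_zero {v : Fin 2 → K} (hv : v 1 = 0) :
    homLift k f v = f 0 * 0 ^ (-k) := by
  simp [homLift, hv]

lemma exists_eq_smul_vecCons_one {v : Fin 2 → K} (hv : v 1 ≠ 0) :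
    ∃ x c : K, c ≠ 0 ∧ v = c • ![x, 1] :=
  ⟨v 0 / v 1, v 1, hv, by ext i; fin_cases i <;> simp [mul_div_cancel₀ _ hv]⟩

end HomogeneousLift

section Slash

variable {Fq Coo : Type} [Field Fq] [Field Coo] (ι : Fq[X] →+* Coo) {k m : ℤ}
  {f : Coo → Coo}

lemma slash_apply_eq_homLift (M : Matrix (Fin 2) (Fin 2) Fq[X]) (z : Coo) :
    slash ι k m M f z = ι M.det ^ m * homLift k f (M.map ι *ᵥ ![z, 1]) := by
  simp [slash, moeb, homLift, Matrix.mulVec, dotProduct, Fin.sum_univ_two]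
  ring

lemma homLift_slash (M : Matrix (Fin 2) (Fin 2) Fq[X]) {v : Fin 2 → Coo}
    (hv : v 1 ≠ 0) :
    homLift k (slash ι k m M f) v = ι M.det ^ m * homLift k f (M.map ι *ᵥ v) := by
  obtain ⟨x, c, hc, rfl⟩ := exists_eq_smul_vecCons_one hv
  rw [homLift_smul hc, homLift_vecCons_one, slash_apply_eq_homLift, Matrix.mulVec_smul,
    homLift_smul hc]
  ring

lemma homLift_slash_of_upper {M : Matrix (Fin 2) (Fin 2) Fq[X]} (hM : M 1 0 = 0)
    (hcusp : k = 0 → f (ι (M 0 1) / ι (M 1 1)) = f 0) (v : Fin 2 → Coo) :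
    homLift k (slash ι k m M f) v = ι M.det ^ m * homLift k f (M.map ι *ᵥ v) := by
  by_cases hv : v 1 = 0
  · have hMv : (M.map ι *ᵥ v) 1 = 0 := by
      simp [Matrix.mulVec, dotProduct, Fin.sum_univ_two, hM, hv]
    rw [homLift_of_snd_eq_zero hv, homLift_of_snd_eq_zero hMv]
    rcases eq_or_ne k 0 with rfl | hk
    · simp [slash, moeb, hcusp rfl, mul_comm]
    · simp [_root_.zero_zpow _ (neg_ne_zero.mpr hk)]
  · exact homLift_slash ι M hv

variable {π : Fq[X]}

lemma homLift_mulVec_of_snd_ne_zero (hf : IsWeakModular ι k m π f)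
    {γ : Matrix (Fin 2) (Fin 2) Fq[X]} (hdet : γ.det = 1) (hc : π ∣ γ 1 0)
    {v : Fin 2 → Coo} (hv : v 1 ≠ 0) :
    homLift k f (γ.map ι *ᵥ v) = homLift k f v := by
  obtain ⟨x, c, hc0, rfl⟩ := exists_eq_smul_vecCons_one hv
  have h := congrFun (hf γ ⟨hdet ▸ isUnit_one, hc⟩) x
  rw [slash_apply_eq_homLift, hdet, map_one, _root_.one_zpow, one_mul] at h
  rw [Matrix.mulVec_smul, homLift_smul hc0, homLift_smul hc0, h, homLift_vecCons_one]

lemma homLift_mulVec (hf : IsWeakModular ι k m π f)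
    {γ : Matrix (Fin 2) (Fin 2) Fq[X]} (hdet : γ.det = 1) (hc : π ∣ γ 1 0)
    (v : Fin 2 → Coo) :
    homLift k f (γ.map ι *ᵥ v) = homLift k f v := by
  by_cases hv : v 1 = 0
  · by_cases hγv : (γ.map ι *ᵥ v) 1 = 0
    · rw [homLift_of_snd_eq_zero hv, homLift_of_snd_eq_zero hγv]
    · -- the pole `v 1 = 0` is handled by the generic case for `adjugate γ` at `γ v`
      have hadj : γ.adjugate.map ι *ᵥ (γ.map ι *ᵥ v) = v := by
        rw [Matrix.mulVec_mulVec, ← Matrix.map_mul, Matrix.adjugate_mul, hdet, one_smul,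
          Matrix.map_one _ (map_zero ι) (map_one ι), Matrix.one_mulVec]
      have h := homLift_mulVec_of_snd_ne_zero ι hf (γ := γ.adjugate)
        (by simp [Matrix.det_adjugate, hdet]) (by simpa [Matrix.adjugate_fin_two] using hc) hγv
      rw [hadj] at h
      exact h.symm
  · exact homLift_mulVec_of_snd_ne_zero ι hf hdet hc hv

lemma slash_slash_eq_of_mul_eq (hf : IsWeakModular ι k m π f)
    {R R' W γ : Matrix (Fin 2) (Fin 2) Fq[X]} (hRW : R * W = γ * (W * R'))
    (hdet : γ.det = 1) (hc : π ∣ γ 1 0) (hR : R 1 0 = 0)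
    (hcusp : k = 0 → f (ι (R 0 1) / ι (R 1 1)) = f 0) (hR' : R' 1 0 = 0)
    (hR'11 : ι (R' 1 1) ≠ 0) :
    slash ι k m W (slash ι k m R f) = slash ι k m R' (slash ι k m W f) := by
  funext z
  have hR'v : (R'.map ι *ᵥ ![z, 1]) 1 ≠ 0 := by
    simpa [Matrix.mulVec, dotProduct, Fin.sum_univ_two, hR'] using hR'11
  have hdetRW : W.det * R.det = R'.det * W.det := by
    have h := congrArg Matrix.det hRW
    rw [Matrix.det_mul, Matrix.det_mul, Matrix.det_mul, hdet, one_mul] at h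
    linear_combination h
  rw [slash_apply_eq_homLift, slash_apply_eq_homLift, homLift_slash_of_upper ι hR hcusp,
    homLift_slash ι W hR'v, Matrix.mulVec_mulVec, Matrix.mulVec_mulVec, ← Matrix.map_mul,
    ← Matrix.map_mul, hRW, Matrix.map_mul, ← Matrix.mulVec_mulVec, homLift_mulVec ι hf hdet hc,
    ← mul_assoc, ← mul_assoc, ← mul_zpow, ← mul_zpow, ← map_mul, ← map_mul, hdetRW]

end Slash

section WeightZero

variable {Fq Coo : Type} [Field Fq] [Field Coo] {ι : Fq[X] →+* Coo} {m : ℤ}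
  {π : Fq[X]} {f : Coo → Coo}

lemma apply_moeb_zero_eq (hf : IsWeakModular ι 0 m π f)
    {γ : Matrix (Fin 2) (Fin 2) Fq[X]} (hdet : γ.det = 1) (hc : π ∣ γ 1 0) :
    f (ι (γ 0 1) / ι (γ 1 1)) = f 0 := by
  simpa [slash, moeb, hdet] using congrFun (hf γ ⟨hdet ▸ isUnit_one, hc⟩) 0

lemma apply_map_eq_apply_zero (hf : IsWeakModular ι 0 m π f) (Q : Fq[X]) :
    f (ι Q) = f 0 := by
  simpa using apply_moeb_zero_eq hf (γ := !![1, Q; 0, 1]) (by simp) (by simp)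

lemma apply_map_div_eq_apply_zero (hf : IsWeakModular ι 0 m π f) {P : Fq[X]}
    (hP : Irreducible P) (hcop : IsCoprime π P) (Q : Fq[X]) :
    f (ι Q / ι P) = f 0 := by
  by_cases hPQ : P ∣ Q
  · obtain ⟨Q', rfl⟩ := hPQ
    rcases eq_or_ne (ι P) 0 with hιP | hιP
    · rw [hιP, div_zero]
    · rw [map_mul, mul_div_cancel_left₀ _ hιP, apply_map_eq_apply_zero hf]
  · obtain ⟨a, b, hab⟩ := hcop.symm.mul_right ((hP.coprime_iff_not_dvd).mpr hPQ)
    simpa using apply_moeb_zero_eq hf (γ := !![a, Q; -(π * b), P])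
      (by rw [Matrix.det_fin_two_of]; linear_combination hab) (by simp)

lemma apply_map_div_eq_apply_zero_of_map_eq_zero (hf : IsWeakModular ι 0 m π f)
    {P : Fq[X]} (hP : Irreducible P) (hιP : ι P = 0) (b d : Fq[X]) :
    f (ι b / ι d) = f 0 := by
  rcases eq_or_ne (ι d) 0 with hιd | hιd
  · rw [hιd, div_zero]
  have hPd : ¬ P ∣ d := fun ⟨e, he⟩ => hιd (by rw [he, map_mul, hιP, zero_mul])
  obtain ⟨u, v, huv⟩ := (hP.coprime_iff_not_dvd).mpr hPd
  have hvd : ι v * ι d = 1 := by simpa [hιP] using congrArg ι huv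
  rw [div_eq_mul_inv, inv_eq_of_mul_eq_one_left hvd, ← map_mul, apply_map_eq_apply_zero hf]

end WeightZero

section CosetMatrices

variable {R : Type*} [CommRing R]

lemma dvd_mul_mul_adjugate_mul_adjugate {δ : R} {M W M' : Matrix (Fin 2) (Fin 2) R}
    (hW : ∀ i, δ ∣ W i 0) (hM' : M' 1 0 = 0) (i j : Fin 2) :
    δ ∣ (M * W * adjugate M' * adjugate W) i j := by
  have hadjM' : adjugate M' 1 0 = 0 := by simp [adjugate_fin_two, hM']
  have hadjW : ∀ j, δ ∣ adjugate W 1 j :=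
    Fin.forall_fin_two.mpr ⟨by simp [adjugate_fin_two, hW], by simp [adjugate_fin_two, hW]⟩
  have hleft : δ ∣ (M * W * adjugate M') i 0 := by
    simp only [Matrix.mul_apply, Fin.sum_univ_two, hadjM', mul_zero, add_zero]
    exact dvd_mul_of_dvd_left (dvd_add (dvd_mul_of_dvd_right (hW 0) _)
      (dvd_mul_of_dvd_right (hW 1) _)) _
  rw [Matrix.mul_apply, Fin.sum_univ_two]
  exact dvd_add (dvd_mul_of_dvd_left hleft _) (dvd_mul_of_dvd_right (hadjW j) _)

lemma mul_mul_adjugate_mul_adjugate_one_zero {M W M' : Matrix (Fin 2) (Fin 2) R}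
    (hM : M 1 0 = 0) (hM' : M' 1 0 = 0) :
    (M * W * adjugate M' * adjugate W) 1 0 =
      M 1 1 * W 1 0 * (M' 1 1 * W 1 1 + W 1 0 * M' 0 1 - W 1 1 * M' 0 0) := by
  simp [Matrix.mul_apply, Fin.sum_univ_two, adjugate_fin_two, hM, hM']
  ring

/-- `γ = M W adj(M') adj(W) / (det W * P)`. -/
lemma exists_det_eq_one_mul_eq [IsDomain R] {P π : R} {W M M' : Matrix (Fin 2) (Fin 2) R}
    (hs : W.det * P ≠ 0) (hdetM : M.det = P) (hdetM' : M'.det = P)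
    (hX : ∀ i j, W.det * P ∣ (M * W * adjugate M' * adjugate W) i j)
    (hX10 : W.det * P * π ∣ (M * W * adjugate M' * adjugate W) 1 0) :
    ∃ γ : Matrix (Fin 2) (Fin 2) R, γ.det = 1 ∧ π ∣ γ 1 0 ∧ M * W = γ * (W * M') := by
  set X := M * W * adjugate M' * adjugate W with hX_def
  choose g hg using hX
  have hXγ : X = (W.det * P) • Matrix.of g := by ext i j; simp [hg i j]
  refine ⟨Matrix.of g, ?_, (mul_dvd_mul_iff_left hs).mp (hg 1 0 ▸ hX10), ?_⟩
  · have hdetX : X.det = (W.det * P) ^ 2 := by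
      simp [hX_def, Matrix.det_mul, Matrix.det_adjugate, hdetM, hdetM']
      ring
    rw [hXγ, Matrix.det_smul, Fintype.card_fin] at hdetX
    exact mul_left_cancel₀ (pow_ne_zero 2 hs) (hdetX.trans (mul_one _).symm)
  · refine smul_right_injective _ hs ?_
    calc (W.det * P) • (M * W) = M * W * adjugate M' * (adjugate W * W) * M' := by
          rw [adjugate_mul, Matrix.mul_smul, Matrix.mul_one, Matrix.smul_mul,
            Matrix.mul_assoc (M * W), adjugate_mul, Matrix.mul_smul, Matrix.mul_one, smul_smul,
            hdetM']
      _ = (W.det * P) • (Matrix.of g * (W * M')) := by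
          rw [← Matrix.smul_mul, ← hXγ, hX_def]; simp only [Matrix.mul_assoc]

end CosetMatrices

section AtkinLehner

variable {Fq : Type} [Field Fq] {π δ P : Fq[X]} {W : Matrix (Fin 2) (Fin 2) Fq[X]}

lemma not_dvd_det_of_isAL (hW : IsAL π δ W) (hδ : δ ∣ π) (hcop : IsCoprime π P)
    (hP : Irreducible P) : ¬ P ∣ W.det := by
  obtain ⟨-, -, -, ζ, hζ, hdetW⟩ := hW
  have hco : IsCoprime W.det P := by
    rw [hdetW, isCoprime_mul_unit_left_left (isUnit_C.mpr hζ.isUnit)]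
    exact hcop.of_isCoprime_of_dvd_left hδ
  exact fun h => hP.not_isUnit (hco.isUnit_of_dvd' h dvd_rfl)

lemma dvd_mul_mul_adjugate_mul_adjugate_of_isAL (hW : IsAL π δ W) (hδπ : δ ∣ π)
    (hcop : IsCoprime π P) {R R' : Matrix (Fin 2) (Fin 2) Fq[X]} (hR : R 1 0 = 0)
    (hR' : R' 1 0 = 0) (hdvd : ∀ i j, P ∣ (R * W * adjugate R') i j) :
    (∀ i j, W.det * P ∣ (R * W * adjugate R' * adjugate W) i j) ∧
      W.det * P * π ∣ (R * W * adjugate R' * adjugate W) 1 0 := by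
  obtain ⟨hW00, hW10, hW11, ζ, hζ, hdetW⟩ := hW
  have hCζ : IsUnit (C ζ) := isUnit_C.mpr hζ.isUnit
  have hδP : IsCoprime δ P := hcop.of_isCoprime_of_dvd_left hδπ
  have hPX : ∀ i j, P ∣ (R * W * adjugate R' * adjugate W) i j := fun i j => by
    rw [Matrix.mul_apply, Fin.sum_univ_two]
    exact dvd_add (dvd_mul_of_dvd_left (hdvd i 0) _) (dvd_mul_of_dvd_left (hdvd i 1) _)
  refine ⟨fun i j => ?_, ?_⟩
  · rw [hdetW, mul_assoc, hCζ.mul_left_dvd]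
    exact hδP.mul_dvd (dvd_mul_mul_adjugate_mul_adjugate
      (Fin.forall_fin_two.mpr ⟨hW00, hδπ.trans hW10⟩) hR' i j) (hPX i j)
  · have hπδ : π * δ ∣ (R * W * adjugate R' * adjugate W) 1 0 := by
      rw [mul_mul_adjugate_mul_adjugate_one_zero hR hR']
      exact mul_dvd_mul (dvd_mul_of_dvd_right hW10 _) (dvd_sub (dvd_add
        (dvd_mul_of_dvd_right hW11 _) (dvd_mul_of_dvd_left (hδπ.trans hW10) _))
        (dvd_mul_of_dvd_left hW11 _))
    rw [hdetW, show C ζ * δ * P * π = C ζ * (π * δ * P) by ring, hCζ.mul_left_dvd]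
    exact (hcop.mul_left hδP).mul_dvd hπδ (hPX 1 0)

end AtkinLehner

section ProjectiveLine

variable {K : Type*}

/-- `P¹(K)` is indexed by `Option K`, with `none` the point at infinity. Modulo `P`, each
`heckeRep` has rank one with row `projLineRow`, and its adjugate has column `projLineCol`. -/
def projLineRow [Zero K] [One K] : Option K → Fin 2 → K
  | none => ![0, 1]
  | some x => ![1, x]

def projLineCol [Zero K] [One K] [Neg K] : Option K → Fin 2 → K
  | none => ![1, 0]
  | some x => ![-x, 1]

variable [Field K]

lemma projLineCol_ne_zero (y : Option K) : projLineCol y ≠ 0 := by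
  cases y <;> simp [projLineCol]

lemma exists_dotProduct_projLineCol_eq_zero (w : Fin 2 → K) :
    ∃ y, w ⬝ᵥ projLineCol y = 0 := by
  by_cases hw : w 0 = 0
  · exact ⟨none, by simp [projLineCol, dotProduct, Fin.sum_univ_two, hw]⟩
  · refine ⟨some (w 1 / w 0), ?_⟩
    simp [projLineCol, dotProduct, Fin.sum_univ_two]
    field_simp
    ring

lemma eq_of_projLineRow_dotProduct_eq_zero {v : Fin 2 → K} (hv : v ≠ 0) {x y : Option K}
    (hx : projLineRow x ⬝ᵥ v = 0) (hy : projLineRow y ⬝ᵥ v = 0) : x = y := by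
  have hv1 : ∀ z, projLineRow z ⬝ᵥ v = 0 → v 1 = 0 → z = none := by
    rintro (_ | z) hz h1
    · rfl
    · simp [projLineRow, dotProduct, Fin.sum_univ_two, h1] at hz
      exact absurd (funext (Fin.forall_fin_two.mpr ⟨hz, h1⟩)) hv
  by_cases h1 : v 1 = 0
  · rw [hv1 x hx h1, hv1 y hy h1]
  rcases x with _ | x <;> rcases y with _ | y <;>
    simp [projLineRow, dotProduct, Fin.sum_univ_two] at hx hy ⊢
  · exact h1 hx
  · exact h1 hy
  · exact mul_right_cancel₀ h1 (by linear_combination hx - hy)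

lemma exists_perm_projLineRow_dotProduct_mulVec_projLineCol [Finite K]
    {M : Matrix (Fin 2) (Fin 2) K} (hM : M.det ≠ 0) :
    ∃ σ : Equiv.Perm (Option K),
      ∀ x, projLineRow x ⬝ᵥ (M *ᵥ projLineCol (σ x)) = 0 := by
  choose σ hσ using fun x => exists_dotProduct_projLineCol_eq_zero (projLineRow x ᵥ* M)
  simp only [← Matrix.dotProduct_mulVec] at hσ
  have hinj : σ.Injective := fun x y hxy =>
    eq_of_projLineRow_dotProduct_eq_zero
      (fun h => projLineCol_ne_zero _ (Matrix.eq_zero_of_mulVec_eq_zero hM h)) (hσ x)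
      (hxy ▸ hσ y)
  exact ⟨Equiv.ofBijective σ (Finite.injective_iff_bijective.mp hinj), hσ⟩

end ProjectiveLine

section HeckeRepresentatives

variable {Fq : Type} [Field Fq]

def coeffsToPoly {n : ℕ} (c : Fin n → Fq) : Fq[X] := ∑ i, C (c i) * X ^ (i : ℕ)

def heckeRep (P : Fq[X]) : Option (Fin P.natDegree → Fq) → Matrix (Fin 2) (Fin 2) Fq[X]
  | none => !![P, 0; 0, 1]
  | some c => !![1, coeffsToPoly c; 0, P]

lemma heckeRep_one_zero (P : Fq[X]) (i : Option (Fin P.natDegree → Fq)) :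
    heckeRep P i 1 0 = 0 := by
  cases i <;> rfl

lemma det_heckeRep (P : Fq[X]) (i : Option (Fin P.natDegree → Fq)) : (heckeRep P i).det = P := by
  cases i <;> simp [heckeRep]

lemma map_heckeRep_one_one_ne_zero {Coo : Type} [Field Coo] {ι : Fq[X] →+* Coo} {P : Fq[X]}
    (hιP : ι P ≠ 0) (i : Option (Fin P.natDegree → Fq)) : ι (heckeRep P i 1 1) ≠ 0 := by
  cases i <;> simp [heckeRep, hιP]

lemma heckeT_eq_sum [Fintype Fq] {Coo : Type} [Field Coo] (ι : Fq[X] →+* Coo) (k m : ℤ)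
    (P : Fq[X]) (f : Coo → Coo) (z : Coo) :
    heckeT ι k m P f z = ι P ^ (k - m) * ∑ i, slash ι k m (heckeRep P i) f z := by
  rw [Fintype.sum_option, mul_add]
  rfl

def coeffsToResidue (P : Fq[X]) (c : Fin P.natDegree → Fq) : AdjoinRoot P :=
  AdjoinRoot.mk P (coeffsToPoly c)

lemma bijective_coeffsToResidue {P : Fq[X]} (hP : P.Monic) :
    Function.Bijective (coeffsToResidue P) := by
  let e : (Fin P.natDegree → Fq) ≃ₗ[Fq] AdjoinRoot P :=
    (AdjoinRoot.powerBasis' hP).basis.equivFun.symm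
  suffices h : coeffsToResidue P = e from h ▸ e.bijective
  funext c
  simp only [coeffsToResidue, coeffsToPoly, map_sum, map_mul, map_pow, AdjoinRoot.mk_C,
    AdjoinRoot.mk_X]
  erw [Module.Basis.equivFun_symm_apply]
  simp [Algebra.smul_def]
  rfl

variable {P : Fq[X]}

lemma exists_heckeRep_map_mk_eq_vecMulVec (i : Option (Fin P.natDegree → Fq)) :
    ∃ u, (heckeRep P i).map (AdjoinRoot.mk P) =
      vecMulVec u (projLineRow (i.map (coeffsToResidue P))) := by
  refine ⟨i.elim ![0, 1] fun _ => ![1, 0], ?_⟩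
  ext a b
  cases i <;> fin_cases a <;> fin_cases b <;>
    simp [heckeRep, projLineRow, coeffsToResidue, vecMulVec_apply]

lemma exists_adjugate_heckeRep_map_mk_eq_vecMulVec (i : Option (Fin P.natDegree → Fq)) :
    ∃ u, (adjugate (heckeRep P i)).map (AdjoinRoot.mk P) =
      vecMulVec (projLineCol (i.map (coeffsToResidue P))) u := by
  refine ⟨i.elim ![1, 0] fun _ => ![0, 1], ?_⟩
  ext a b
  cases i <;> fin_cases a <;> fin_cases b <;>
    simp [heckeRep, adjugate_fin_two, projLineCol, coeffsToResidue, vecMulVec_apply]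

lemma dvd_heckeRep_mul_mul_adjugate {W : Matrix (Fin 2) (Fin 2) Fq[X]}
    {i j : Option (Fin P.natDegree → Fq)}
    (h : projLineRow (i.map (coeffsToResidue P)) ⬝ᵥ
      (W.map (AdjoinRoot.mk P) *ᵥ projLineCol (j.map (coeffsToResidue P))) = 0)
    (a b : Fin 2) : P ∣ (heckeRep P i * W * adjugate (heckeRep P j)) a b := by
  obtain ⟨u, hu⟩ := exists_heckeRep_map_mk_eq_vecMulVec i
  obtain ⟨v, hv⟩ := exists_adjugate_heckeRep_map_mk_eq_vecMulVec (P := P) j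
  have hmap : (heckeRep P i * W * adjugate (heckeRep P j)).map (AdjoinRoot.mk P) = 0 := by
    rw [Matrix.map_mul, Matrix.map_mul, hu, hv, vecMulVec_mul, vecMulVec_mul_vecMulVec,
      ← Matrix.dotProduct_mulVec, h, zero_smul, vecMulVec_zero]
  exact AdjoinRoot.mk_eq_zero.mp (congrFun (congrFun hmap a) b)

lemma exists_perm_dvd_heckeRep [Fintype Fq] (hP : P.Monic) (hPirr : Irreducible P)
    {W : Matrix (Fin 2) (Fin 2) Fq[X]} (hW : ¬ P ∣ W.det) :
    ∃ σ : Equiv.Perm (Option (Fin P.natDegree → Fq)),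
      ∀ i a b, P ∣ (heckeRep P i * W * adjugate (heckeRep P (σ i))) a b := by
  have := Fact.mk hPirr
  let e := Equiv.ofBijective _ (bijective_coeffsToResidue hP)
  have : Finite (AdjoinRoot P) := Finite.of_equiv _ e
  have hdet : (W.map (AdjoinRoot.mk P)).det ≠ 0 := by
    rw [← RingHom.mapMatrix_apply, ← RingHom.map_det]
    exact mt AdjoinRoot.mk_eq_zero.mp hW
  obtain ⟨τ, hτ⟩ := exists_perm_projLineRow_dotProduct_mulVec_projLineCol hdet
  let E := Equiv.optionCongr e
  refine ⟨(E.trans τ).trans E.symm, fun i => dvd_heckeRep_mul_mul_adjugate ?_⟩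
  have hE : ∀ x, x.map (coeffsToResidue P) = E x := fun _ => rfl
  simpa [hE] using hτ (E i)

end HeckeRepresentatives

section HeckeOperator

variable {Fq Coo : Type} [Field Fq] [Field Coo] {ι : Fq[X] →+* Coo}
  {k m : ℤ} {P : Fq[X]}

lemma apply_map_heckeRep_div_eq_apply_zero {π : Fq[X]} {f : Coo → Coo}
    (hf : IsWeakModular ι 0 m π f) (hP : Irreducible P) (hcop : IsCoprime π P)
    (i : Option (Fin P.natDegree → Fq)) :
    f (ι (heckeRep P i 0 1) / ι (heckeRep P i 1 1)) = f 0 := by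
  cases i with
  | none => simp [heckeRep]
  | some c => exact apply_map_div_eq_apply_zero hf hP hcop _

variable [Fintype Fq]

lemma slash_heckeT_apply (W : Matrix (Fin 2) (Fin 2) Fq[X]) (g : Coo → Coo) (z : Coo) :
    slash ι k m W (heckeT ι k m P g) z =
      ι P ^ (k - m) * ∑ i, slash ι k m W (slash ι k m (heckeRep P i) g) z := by
  have hW : ∀ h : Coo → Coo, slash ι k m W h z =
      h (moeb ι W z) * ι W.det ^ m * (ι (W 1 0) * z + ι (W 1 1)) ^ (-k) := fun _ => rfl
  simp only [hW, heckeT_eq_sum, Finset.mul_sum, Finset.sum_mul, mul_assoc]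

lemma heckeT_eq_zero_of_map_eq_zero (hιP : ι P = 0) (hkm : k ≠ 0 ∨ m ≠ 0)
    (g : Coo → Coo) :
    heckeT ι k m P g = 0 := by
  funext z
  rw [heckeT_eq_sum, Pi.zero_apply]
  by_cases hkm' : k = m
  · subst hkm'
    have hm : k ≠ 0 := hkm.elim id id
    refine mul_eq_zero_of_right _ (Finset.sum_eq_zero fun i _ => ?_)
    simp [slash, det_heckeRep, hιP, _root_.zero_zpow _ hm]
  · exact mul_eq_zero_of_left (by rw [hιP, _root_.zero_zpow _ (sub_ne_zero.mpr hkm')]) _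

lemma heckeT_zero_zero_apply_of_map_eq_zero (hιP : ι P = 0) (g : Coo → Coo) (z : Coo) :
    heckeT ι 0 0 P g z = ∑ _i : Option (Fin P.natDegree → Fq), g 0 := by
  rw [heckeT_eq_sum, sub_self, zpow_zero, one_mul]
  refine Finset.sum_congr rfl fun i _ => ?_
  cases i <;> simp [slash, moeb, heckeRep, hιP]

lemma slash_heckeT_of_map_eq_zero {π : Fq[X]} {f : Coo → Coo}
    (hf : IsWeakModular ι k m π f) (hP : Irreducible P) (hιP : ι P = 0)
    (W : Matrix (Fin 2) (Fin 2) Fq[X]) :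
    slash ι k m W (heckeT ι k m P f) = heckeT ι k m P (slash ι k m W f) := by
  by_cases hkm : k = 0 ∧ m = 0
  · obtain ⟨rfl, rfl⟩ := hkm
    funext z
    have hcusp := apply_map_div_eq_apply_zero_of_map_eq_zero hf hP hιP (W 0 1) (W 1 1)
    simp [slash, moeb, heckeT_zero_zero_apply_of_map_eq_zero hιP, hcusp]
  · rw [not_and_or] at hkm
    funext z
    simp [slash, heckeT_eq_zero_of_map_eq_zero hιP hkm]

end HeckeOperator

theorem heckeT_comm_atkinLehner_general {Fq Coo : Type} [Field Fq] [Fintype Fq] [Field Coo]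
    (ι : Polynomial Fq →+* Coo) (k m : ℤ)
    (π P δ ε : Polynomial Fq)
    (hP : P.Monic) (hPirr : Irreducible P) (hcop : IsCoprime π P)
    (hπ : π = δ * ε)
    (W : Matrix (Fin 2) (Fin 2) (Polynomial Fq)) (hW : IsAL π δ W)
    (f : Coo → Coo) (hf : IsWeakModular ι k m π f) :
    slash ι k m W (heckeT ι k m P f) = heckeT ι k m P (slash ι k m W f) := by
  by_cases hιP : ι P = 0
  · exact slash_heckeT_of_map_eq_zero hf hPirr hιP W
  have hPW : ¬ P ∣ W.det := not_dvd_det_of_isAL hW ⟨ε, hπ⟩ hcop hPirr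
  have hdetW : W.det ≠ 0 := fun h => hPW (h ▸ dvd_zero P)
  obtain ⟨σ, hσ⟩ := exists_perm_dvd_heckeRep hP hPirr hPW
  funext z
  rw [slash_heckeT_apply, heckeT_eq_sum,
    ← Equiv.sum_comp σ fun i => slash ι k m (heckeRep P i) (slash ι k m W f) z]
  congr 1
  refine Finset.sum_congr rfl fun i _ => ?_
  obtain ⟨hX, hX10⟩ := dvd_mul_mul_adjugate_mul_adjugate_of_isAL hW ⟨ε, hπ⟩ hcop
    (heckeRep_one_zero P i) (heckeRep_one_zero P (σ i)) (hσ i)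
  obtain ⟨γ, hdet, hc, hRW⟩ := exists_det_eq_one_mul_eq (mul_ne_zero hdetW hPirr.ne_zero)
    (det_heckeRep P i) (det_heckeRep P (σ i)) hX hX10
  refine congrFun (slash_slash_eq_of_mul_eq ι hf hRW hdet hc (heckeRep_one_zero P i) ?_
    (heckeRep_one_zero P (σ i)) (map_heckeRep_one_one_ne_zero hιP (σ i))) z
  rintro rfl
  exact apply_map_heckeRep_div_eq_apply_zero hf hPirr hcop i

/-- Theorem `ThmComm`: for `(π,P)=1`, `P` monic irreducible,
`δ ∣ π` with `gcd(δ,π/δ)=1`, and `f ∈ M_{k,m}(Γ₀(π))`, the Hecke operator `T_p`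
commutes with the Atkin–Lehner involution `W_d^m`. -/
theorem heckeT_comm_atkinLehner {Fq Coo : Type} [Field Fq] [Fintype Fq] [Field Coo]
    (ι : Polynomial Fq →+* Coo) (k m : ℤ)
    (π P δ ε : Polynomial Fq)
    (hP : P.Monic) (hPirr : Irreducible P) (hcop : IsCoprime π P)
    (hπ : π = δ * ε) (hcopδ : IsCoprime δ ε)
    (W : Matrix (Fin 2) (Fin 2) (Polynomial Fq)) (hW : IsAL π δ W)
    (f : Coo → Coo) (hf : IsWeakModular ι k m π f) :
    slash ι k m W (heckeT ι k m P f) = heckeT ι k m P (slash ι k m W f) :=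
  heckeT_comm_atkinLehner_general ι k m π P δ ε hP hPirr hcop hπ W hW f hf
end
end

section
/- Let m, p be coprime ideals of A = F_q[t], p = (P) prime. Define S^{p-new} = Ker(Tr) ∩ Ker(Tr^{(p)}) ⊂ S_{k,m}(Γ0(mp)), where Tr = Tr_m^{mp} and Tr^{(p)} = Tr ∘ W_p^{mp}. Then for every f ∈ S^{p-new}, one has U_p(f) |_{k,m} W_p^{mp} = −P^m f = U_p(f |_{k,m} W_p^{mp}); in particular W_p^{mp} and U_p commute on S^{p-new}. -/
open Matrix

noncomputable section

/-- The trace map from level `mp` down to level `m`, defined via the formula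
`Tr(f) = f + P^{-m} U_p(f |_{k,m} W_p^{mp})` (Lemma `LemTr` of the paper). -/
def trMap {Fq Coo : Type} [Field Fq] [Fintype Fq] [Field Coo] (ι : Polynomial Fq →+* Coo)
    (k m : ℤ) (P : Polynomial Fq) (Wp : Matrix (Fin 2) (Fin 2) (Polynomial Fq))
    (f : Coo → Coo) : Coo → Coo :=
  fun z => f z + ι P ^ (-m) * heckeU ι k m P (slash ι k m Wp f) z

/-- The `p`-twisted trace `Tr^{(p)}(f) = f |_{k,m} W_p^{mp} + P^{m-k} U_p(f)`. -/
def trTwP {Fq Coo : Type} [Field Fq] [Fintype Fq] [Field Coo] (ι : Polynomial Fq →+* Coo)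
    (k m : ℤ) (P : Polynomial Fq) (Wp : Matrix (Fin 2) (Fin 2) (Polynomial Fq))
    (f : Coo → Coo) : Coo → Coo :=
  fun z => slash ι k m Wp f z + ι P ^ (m - k) * heckeU ι k m P f z

/-!
Vanishing of `Tr f` says `U_p(f|W) = -P^m f`, and vanishing of `Tr^{(p)} f` says
`U_p f = -P^{k-m} f|W`. Writing `W = [[P a, b], [π P c, P d]]`, one has `W² = P • M` with
`M ∈ Γ₀(π P)` of determinant one, so `(U_p f)|W = -P^{k-m} f|W² = -P^m f`.

The cocycle relation `f|W|W = f|W²` breaks down at the pole `z` of `W`, where the slash operator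
only sees the junk value `x / 0 = 0`. There `f z` is computed from `Tr^{(p)} f = 0` at `P z` and
`Tr f = 0` at `0`: every other point these traces involve is either a pole of a matrix of
`Γ₀(π P)` or the image of `0` under one, and `P ∤ Q` for the nonzero `Q` of degree `< deg P`.
The weight enters these junk values only through `0 ^ (-k)`, which is `1` for `k = 0` and `0`
otherwise. When `ι P = 0` every point is a pole of `W` and the identities degenerate.
-/

open Polynomial

lemma zero_zpow_mul_zpow {K : Type*} [GroupWithZero K] (x : K) {n l : ℤ} (h : n = 0 → l = 0) :
    (0 : K) ^ n * x ^ l = 0 ^ n := by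
  rcases eq_or_ne n 0 with rfl | hn
  · simp [h rfl]
  · simp [_root_.zero_zpow _ hn]

section Newform

variable {Fq Coo : Type} [Field Fq] [Field Coo] (ι : Fq[X] →+* Coo) (k m : ℤ)

def denom (M : Matrix (Fin 2) (Fin 2) Fq[X]) (z : Coo) : Coo :=
  ι (M 1 0) * z + ι (M 1 1)

lemma slash_apply (M : Matrix (Fin 2) (Fin 2) Fq[X]) (g : Coo → Coo) (z : Coo) :
    slash ι k m M g z = g (moeb ι M z) * ι M.det ^ m * denom ι M z ^ (-k) := rfl

lemma slash_apply_of_denom_eq_zero {M : Matrix (Fin 2) (Fin 2) Fq[X]} {z : Coo}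
    (hz : denom ι M z = 0) (g : Coo → Coo) :
    slash ι k m M g z = g 0 * ι M.det ^ m * 0 ^ (-k) := by
  have hmoeb : moeb ι M z = 0 := div_eq_zero_iff.mpr (Or.inr hz)
  rw [slash_apply, hmoeb, hz]

lemma slash_zero (M : Matrix (Fin 2) (Fin 2) Fq[X]) : slash ι k m M 0 = 0 := by
  funext z
  simp [slash]

lemma slash_const_mul (M : Matrix (Fin 2) (Fin 2) Fq[X]) (a : Coo) (g : Coo → Coo) :
    slash ι k m M (fun z => a * g z) = fun z => a * slash ι k m M g z := by
  funext z
  simp only [slash, mul_assoc]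

lemma moeb_mul {M N : Matrix (Fin 2) (Fin 2) Fq[X]} {z : Coo} (hz : denom ι M z ≠ 0) :
    moeb ι (N * M) z = moeb ι N (moeb ι M z) := by
  simp only [denom] at hz
  simp only [moeb, Matrix.mul_apply, Fin.sum_univ_two, map_add, map_mul]
  rw [← div_div_div_cancel_right₀ hz]
  congr 1 <;> field_simp <;> ring

lemma denom_mul {M N : Matrix (Fin 2) (Fin 2) Fq[X]} {z : Coo} (hz : denom ι M z ≠ 0) :
    denom ι (N * M) z = denom ι N (moeb ι M z) * denom ι M z := by
  simp only [denom] at hz ⊢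
  simp only [moeb, Matrix.mul_apply, Fin.sum_univ_two, map_add, map_mul]
  field_simp
  ring

lemma slash_slash_apply {M N : Matrix (Fin 2) (Fin 2) Fq[X]} {z : Coo} (hz : denom ι M z ≠ 0)
    (g : Coo → Coo) : slash ι k m M (slash ι k m N g) z = slash ι k m (N * M) g z := by
  simp only [slash_apply, moeb_mul ι hz, denom_mul ι hz, Matrix.det_mul, map_mul, mul_zpow]
  ring

lemma slash_smul {p : Fq[X]} (hp : ι p ≠ 0) (M : Matrix (Fin 2) (Fin 2) Fq[X])
    (g : Coo → Coo) : slash ι k m (p • M) g = fun z => ι p ^ (2 * m - k) * slash ι k m M g z := by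
  funext z
  have hmoeb : moeb ι (p • M) z = moeb ι M z := by
    simp only [moeb, Matrix.smul_apply, smul_eq_mul, map_mul, mul_assoc, ← mul_add]
    exact mul_div_mul_left _ _ hp
  have hdenom : denom ι (p • M) z = ι p * denom ι M z := by
    simp only [denom, Matrix.smul_apply, smul_eq_mul, map_mul, mul_assoc, ← mul_add]
  rw [slash_apply, slash_apply, hmoeb, hdenom, Matrix.det_smul, Fintype.card_fin, map_mul,
    map_pow, mul_zpow, mul_zpow, sub_eq_add_neg, zpow_add₀ hp, _root_.zpow_mul, zpow_ofNat]
  ring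

variable {ι k m} in
lemma IsWeakModular.apply_moeb {N : Fq[X]} {f : Coo → Coo} (hf : IsWeakModular ι k m N f)
    {A B C D : Fq[X]} (hC : N ∣ C) (hdet : A * D - B * C = 1) (z : Coo) :
    f ((ι A * z + ι B) / (ι C * z + ι D)) * (ι C * z + ι D) ^ (-k) = f z := by
  have hmem : !![A, B; C, D] ∈ Gamma0 N := ⟨by simp [Matrix.det_fin_two_of, hdet], by simpa⟩
  simpa [slash, moeb, Matrix.det_fin_two_of, hdet] using congrFun (hf _ hmem) z

variable {ι k m} in
lemma IsWeakModular.apply_eq_of_denom_eq_zero {N : Fq[X]} {f : Coo → Coo}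
    (hf : IsWeakModular ι k m N f) {C D : Fq[X]} (hC : N ∣ C) (hCD : IsCoprime C D) {z : Coo}
    (hz : ι C * z + ι D = 0) : f z = 0 ^ (-k) * f 0 := by
  obtain ⟨u, v, huv⟩ := hCD
  have h := hf.apply_moeb (A := v) (B := -u) (D := D) hC (by linear_combination huv) z
  rw [hz, div_zero] at h
  rw [← h, mul_comm]

variable {ι k m} in
lemma IsWeakModular.apply_div_mul_zpow {N : Fq[X]} {f : Coo → Coo}
    (hf : IsWeakModular ι k m N f) {B D : Fq[X]} (hBD : IsCoprime D (N * B)) :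
    f (ι B / ι D) * ι D ^ (-k) = f 0 := by
  obtain ⟨u, v, huv⟩ := hBD
  simpa using hf.apply_moeb (A := u) (C := -(v * N)) ⟨-v, by ring⟩ (by linear_combination huv) 0

lemma not_dvd_ofFn {P : Fq[X]} [DecidableEq Fq] (hP : P ≠ 0) {c : Fin P.natDegree → Fq}
    (hc : c ≠ 0) : ¬ P ∣ ofFn P.natDegree c := by
  have hne : ofFn P.natDegree c ≠ 0 := by
    rw [← map_zero (ofFn P.natDegree)]
    exact (injective_ofFn _).ne hc
  intro h
  refine (degree_le_of_dvd h hne).not_gt ?_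
  rw [degree_eq_natDegree hP]
  exact ofFn_degree_lt c

section Hecke

variable [Fintype Fq]

lemma heckeU_apply [DecidableEq Fq] (P : Fq[X]) (g : Coo → Coo) (z : Coo) :
    heckeU ι k m P g z = ι P ^ (k - m) *
      ∑ c, g ((z + ι (ofFn P.natDegree c)) / ι P) * ι P ^ m * ι P ^ (-k) := by
  simp [heckeU, slash, moeb, Matrix.det_fin_two_of, ofFn_eq_sum_monomial,
    C_mul_X_pow_eq_monomial]

lemma heckeU_zero (P : Fq[X]) : heckeU ι k m P 0 = 0 := by
  classical
  funext z
  simp [heckeU_apply]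

lemma heckeU_apply_of_map_ne_zero [DecidableEq Fq] {P : Fq[X]} (hι : ι P ≠ 0) (g : Coo → Coo)
    (z : Coo) :
    heckeU ι k m P g z = ∑ c, g ((z + ι (ofFn P.natDegree c)) / ι P) := by
  rw [heckeU_apply, Finset.mul_sum]
  refine Finset.sum_congr rfl fun c _ => ?_
  rw [mul_comm, mul_assoc, mul_assoc, ← zpow_add₀ hι, ← zpow_add₀ hι,
    show m + (-k + (k - m)) = 0 by ring, zpow_zero, mul_one]

lemma heckeU_apply_of_map_eq_zero {P : Fq[X]} (hι : ι P = 0) (g : Coo → Coo) (z : Coo) :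
    heckeU ι k m P g z = heckeU ι k m P g 0 := by
  classical
  simp only [heckeU_apply, hι, div_zero]

lemma heckeU_apply_of_forall_ne_zero [DecidableEq Fq] {P : Fq[X]} (hι : ι P ≠ 0)
    {g : Coo → Coo} {z b : Coo} (h : ∀ c ≠ 0, g ((z + ι (ofFn P.natDegree c)) / ι P) = b) :
    heckeU ι k m P g z = g (z / ι P) + (Fintype.card (Fin P.natDegree → Fq) - 1) * b := by
  rw [heckeU_apply_of_map_ne_zero ι k m hι, Fintype.sum_eq_add_sum_compl 0,
    Finset.sum_congr rfl fun c hc => h c (by simpa using hc), Finset.sum_const,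
    Finset.card_compl, Finset.card_singleton, nsmul_eq_mul, Nat.cast_sub Fintype.card_pos]
  simp

end Hecke

section Trace

variable [Fintype Fq] {P : Fq[X]} {W : Matrix (Fin 2) (Fin 2) Fq[X]} {f : Coo → Coo}
variable {ι k m}

lemma heckeU_slash_of_trMap_eq_zero (hTr : trMap ι k m P W f = 0) :
    heckeU ι k m P (slash ι k m W f) = fun z => -(ι P ^ m) * f z := by
  have h z : f z + ι P ^ (-m) * heckeU ι k m P (slash ι k m W f) z = 0 := congrFun hTr z
  by_cases hPm : ι P = 0 ∧ m ≠ 0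
  · have hf : f = 0 := funext fun z => by
      simpa [hPm.1, _root_.zero_zpow _ (neg_ne_zero.mpr hPm.2)] using h z
    subst hf
    funext z
    simp [slash_zero, heckeU_zero]
  · have hinv : ι P ^ m * ι P ^ (-m) = 1 := by
      by_cases hι : ι P = 0
      · simp [show m = 0 by tauto]
      · rw [← zpow_add₀ hι, add_neg_cancel, zpow_zero]
    funext z
    linear_combination (ι P ^ m) * h z - heckeU ι k m P (slash ι k m W f) z * hinv

lemma heckeU_eq_of_trTwP_eq_zero (hι : ι P ≠ 0) (hTrp : trTwP ι k m P W f = 0) :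
    heckeU ι k m P f = fun z => -(ι P ^ (k - m)) * slash ι k m W f z := by
  funext z
  have h : slash ι k m W f z + ι P ^ (m - k) * heckeU ι k m P f z = 0 := congrFun hTrp z
  have hinv : ι P ^ (k - m) * ι P ^ (m - k) = 1 := by
    rw [← zpow_add₀ hι, sub_add_sub_cancel, sub_self, zpow_zero]
  linear_combination (ι P ^ (k - m)) * h - heckeU ι k m P f z * hinv

end Trace

def atkinLehnerMatrix (π P a b c d : Fq[X]) : Matrix (Fin 2) (Fin 2) Fq[X] :=
  !![P * a, b; π * P * c, P * d]

lemma IsAL.exists_eq_atkinLehnerMatrix {π P : Fq[X]} {W : Matrix (Fin 2) (Fin 2) Fq[X]}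
    (hW : IsAL (π * P) P W) (hdet : W.det = P) (hP : P ≠ 0) :
    ∃ a b c d, W = atkinLehnerMatrix π P a b c d ∧ P * a * d - π * b * c = 1 := by
  obtain ⟨⟨a, ha⟩, ⟨c, hc⟩, ⟨d, hd⟩, -⟩ := hW
  refine ⟨a, W 0 1, c, d, ?_, mul_left_cancel₀ hP ?_⟩
  · ext i j
    fin_cases i <;> fin_cases j <;> simp [atkinLehnerMatrix, ha, hc, hd]
  · rw [Matrix.det_fin_two, ha, hc, hd] at hdet
    linear_combination hdet

section AtkinLehner

variable {π P a b c d : Fq[X]}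

local notation "W" => atkinLehnerMatrix π P a b c d

lemma det_atkinLehnerMatrix : (W).det = P * (P * a * d - π * b * c) := by
  rw [atkinLehnerMatrix, Matrix.det_fin_two_of]
  ring

lemma denom_atkinLehnerMatrix (z : Coo) :
    denom ι W z = ι π * ι P * ι c * z + ι P * ι d := by
  simp [denom, atkinLehnerMatrix]

lemma moeb_atkinLehnerMatrix (z : Coo) :
    moeb ι W z = (ι P * ι a * z + ι b) / denom ι W z := by
  simp [moeb, denom, atkinLehnerMatrix]

lemma atkinLehnerMatrix_mul_self : W * W = P • !![P * a ^ 2 + π * b * c, b * (a + d);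
    π * P * (c * (a + d)), π * b * c + P * d ^ 2] := by
  refine Matrix.ext fun i j => ?_
  fin_cases i <;> fin_cases j <;> simp [atkinLehnerMatrix, Matrix.mul_apply] <;> ring

lemma slash_atkinLehnerMatrix_heckeU_of_map_eq_zero [Fintype Fq] {f : Coo → Coo}
    (hι : ι P = 0) (hTr : trMap ι k m P W f = 0) (hTrp : trTwP ι k m P W f = 0) :
    slash ι k m W (heckeU ι k m P f) = fun z => -(ι P ^ m) * f z := by
  have hslash (g : Coo → Coo) (y : Coo) : slash ι k m W g y = g 0 * 0 ^ m * 0 ^ (-k) := by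
    rw [slash_apply_of_denom_eq_zero ι k m (by simp [denom_atkinLehnerMatrix, hι]),
      det_atkinLehnerMatrix, map_mul, hι, zero_mul]
  funext z
  rw [hslash, hι]
  rcases eq_or_ne m 0 with rfl | hm
  swap
  · simp [_root_.zero_zpow _ hm]
  have hTr' y : f y + heckeU ι k 0 P (slash ι k 0 W f) y = 0 := by
    simpa [trMap] using congrFun hTr y
  have hTrp' y : slash ι k 0 W f y + 0 ^ (-k) * heckeU ι k 0 P f y = 0 := by
    simpa [trTwP, hι] using congrFun hTrp y
  rcases eq_or_ne k 0 with rfl | hk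
  · have hconst : f z = f 0 := by
      linear_combination hTr' z - hTr' 0 - heckeU_apply_of_map_eq_zero ι 0 0 hι _ z
    have h0 := hTrp' 0
    rw [hslash] at h0
    simp only [zpow_zero, neg_zero, mul_one, one_mul] at h0 ⊢
    linear_combination h0 + hconst
  · have hslash0 : slash ι k 0 W f = 0 := funext fun y => by
      simpa [_root_.zero_zpow _ (neg_ne_zero.mpr hk)] using hTrp' y
    have hfz : f z = 0 := by simpa [hslash0, heckeU_zero] using hTr' z
    simp [_root_.zero_zpow _ (neg_ne_zero.mpr hk), hfz]

variable (hE : P * a * d - π * b * c = 1)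
include hE

lemma isCoprime_mul_of_not_dvd (hP : Irreducible P) {Q : Fq[X]} (hQ : ¬ P ∣ Q) :
    IsCoprime P (π * c * Q) :=
  IsCoprime.mul_right ⟨a * d, -b, by linear_combination hE⟩ (hP.coprime_iff_not_dvd.mpr hQ)

variable {ι k m} {f : Coo → Coo} (hf : IsWeakModular ι k m (π * P) f)
include hf

lemma slash_atkinLehnerMatrix_apply_mul_of_denom_eq_zero {z : Coo} (hz : denom ι W z = 0) :
    slash ι k m W f (ι P * z) = 0 ^ (-k) * ι P ^ m * f 0 := by
  have hdet : ι (W).det = ι P := by rw [det_atkinLehnerMatrix, hE, mul_one]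
  by_cases hw : denom ι W (ι P * z) = 0
  · rw [slash_apply_of_denom_eq_zero ι k m hw, hdet]
    ring
  have hcop : IsCoprime (π * P * (c * (d * (1 - P)))) (P ^ 2 * a * d - π * b * c) := by
    -- `P ^ 2 * a * d - π * b * c` is `P` modulo `π * c` and `1` modulo `P * d`.
    have h1 : IsCoprime (π * c) (P ^ 2 * a * d - π * b * c) :=
      ⟨-b - a * d * b * (P - 1), a * d, by linear_combination (P * a * d + 1) * hE⟩
    have h2 : IsCoprime (P * (d * (1 - P))) (P ^ 2 * a * d - π * b * c) :=
      ⟨a, 1, by linear_combination hE⟩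
    convert h1.mul_left h2 using 1
    ring
  rw [slash_apply, hdet, hf.apply_eq_of_denom_eq_zero ⟨c * (d * (1 - P)), by ring⟩ hcop]
  · linear_combination
      (ι P ^ m * f 0) * zero_zpow_mul_zpow (denom ι W (ι P * z)) (n := -k) id
  rw [moeb_atkinLehnerMatrix, mul_div_assoc', div_add' _ _ _ hw, div_eq_zero_iff]
  left
  rw [denom_atkinLehnerMatrix] at hz ⊢
  simp only [map_sub, map_mul, map_pow, map_one]
  linear_combination (ι P * (ι P * ι a * ι d - ι π * ι b * ι c)) * hz

variable (hι : ι P ≠ 0)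
include hι

lemma slash_atkinLehnerMatrix_slash_apply {z : Coo} (hz : denom ι W z ≠ 0) :
    slash ι k m W (slash ι k m W f) z = ι P ^ (2 * m - k) * f z := by
  have hdet : (P * a ^ 2 + π * b * c) * (π * b * c + P * d ^ 2) -
      b * (a + d) * (π * P * (c * (a + d))) = 1 := by
    linear_combination (P * a * d - π * b * c + 1) * hE
  have hM : slash ι k m !![P * a ^ 2 + π * b * c, b * (a + d);
      π * P * (c * (a + d)), π * b * c + P * d ^ 2] f = f :=
    hf _ ⟨by simp [Matrix.det_fin_two_of, hdet], by simp⟩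
  rw [slash_slash_apply ι k m hz, atkinLehnerMatrix_mul_self, slash_smul ι k m hι, hM]

lemma slash_atkinLehnerMatrix_apply_div (hP : Irreducible P) {Q : Fq[X]} (hQ : ¬ P ∣ Q) :
    slash ι k m W f (ι Q / ι P) = ι P ^ m * f 0 := by
  have hcop : IsCoprime (π * c * Q + P * d) (π * P * (a * Q + b)) := by
    have h1 : IsCoprime (π * c * Q + P * d) (a * Q + b) :=
      ⟨a, -(π * c), by linear_combination hE⟩
    have h2 : IsCoprime (π * c * Q + P * d) π :=
      ⟨a, -(b * c) - a * c * Q, by linear_combination hE⟩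
    have h3 : IsCoprime (π * c * Q + P * d) P := by
      obtain ⟨u, v, huv⟩ := isCoprime_mul_of_not_dvd hE hP hQ
      exact ⟨v, u - v * d, by linear_combination huv⟩
    rw [mul_assoc π P]
    exact h2.mul_right (h3.mul_right h1)
  have hden : denom ι W (ι Q / ι P) = ι (π * c * Q + P * d) := by
    rw [denom_atkinLehnerMatrix]
    simp only [map_add, map_mul]
    field_simp
  have hmoeb : moeb ι W (ι Q / ι P) = ι (a * Q + b) / ι (π * c * Q + P * d) := by
    rw [moeb_atkinLehnerMatrix, hden]
    simp only [map_add, map_mul]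
    field_simp
  rw [slash_apply, hmoeb, hden, det_atkinLehnerMatrix, hE, mul_one, mul_right_comm,
    hf.apply_div_mul_zpow hcop, mul_comm]

lemma heckeU_apply_mul_of_denom_eq_zero [Fintype Fq] (hP : Irreducible P) {z : Coo}
    (hz : denom ι W z = 0) :
    heckeU ι k m P f (ι P * z) =
      f z + (Fintype.card (Fin P.natDegree → Fq) - 1) * (0 ^ (-k) * f 0) := by
  classical
  rw [heckeU_apply_of_forall_ne_zero ι k m hι, mul_div_cancel_left₀ z hι]
  intro e he
  set Q := ofFn P.natDegree e
  have hcop : IsCoprime (π * P * c) (P * d - π * c * Q) := by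
    obtain ⟨u, v, huv⟩ := isCoprime_mul_of_not_dvd hE hP (not_dvd_ofFn hP.ne_zero he)
    have h1 : IsCoprime (π * c) (P * d - π * c * Q) :=
      ⟨a * Q - b, a, by linear_combination hE⟩
    have h2 : IsCoprime P (P * d - π * c * Q) := ⟨u + v * d, -v, by linear_combination huv⟩
    rw [mul_right_comm]
    exact h1.mul_left h2
  refine hf.apply_eq_of_denom_eq_zero ⟨c, by ring⟩ hcop ?_
  rw [denom_atkinLehnerMatrix] at hz
  simp only [map_sub, map_mul]
  field_simp
  linear_combination hz

variable [Fintype Fq]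

lemma apply_eq_of_denom_atkinLehnerMatrix_eq_zero (hP : Irreducible P)
    (hTrp : trTwP ι k m P W f = 0) {z : Coo} (hz : denom ι W z = 0) :
    f z = -(Fintype.card (Fin P.natDegree → Fq)) * (0 ^ (-k) * f 0) := by
  have h := congrFun (heckeU_eq_of_trTwP_eq_zero hι hTrp) (ι P * z)
  rw [heckeU_apply_mul_of_denom_eq_zero hE hf hι hP hz,
    slash_atkinLehnerMatrix_apply_mul_of_denom_eq_zero hE hf hz] at h
  have hk : ι P ^ (k - m) * ι P ^ m * 0 ^ (-k) = 0 ^ (-k) := by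
    rw [← zpow_add₀ hι, sub_add_cancel, mul_comm]
    exact zero_zpow_mul_zpow _ neg_eq_zero.mp
  linear_combination h - f 0 * hk

lemma slash_atkinLehnerMatrix_apply_zero (hP : Irreducible P) (hTr : trMap ι k m P W f = 0) :
    slash ι k m W f 0 = -(Fintype.card (Fin P.natDegree → Fq)) * ι P ^ m * f 0 := by
  classical
  have h := congrFun (heckeU_slash_of_trMap_eq_zero hTr) 0
  rw [heckeU_apply_of_forall_ne_zero ι k m hι (b := ι P ^ m * f 0) fun e he => by
    rw [zero_add]
    exact slash_atkinLehnerMatrix_apply_div hE hf hι hP (not_dvd_ofFn hP.ne_zero he),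
    zero_div] at h
  linear_combination h

lemma slash_atkinLehnerMatrix_heckeU_of_map_ne_zero (hP : Irreducible P)
    (hTr : trMap ι k m P W f = 0) (hTrp : trTwP ι k m P W f = 0) :
    slash ι k m W (heckeU ι k m P f) = fun z => -(ι P ^ m) * f z := by
  have hU := heckeU_eq_of_trTwP_eq_zero hι hTrp
  funext z
  by_cases hz : denom ι W z = 0
  · have hk : ι P ^ k * 0 ^ (-k) = 0 ^ (-k) := by
      rw [mul_comm]
      exact zero_zpow_mul_zpow _ neg_eq_zero.mp
    rw [slash_apply_of_denom_eq_zero ι k m hz, hU]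
    beta_reduce
    rw [slash_atkinLehnerMatrix_apply_zero hE hf hι hP hTr,
      apply_eq_of_denom_atkinLehnerMatrix_eq_zero hE hf hι hP hTrp hz, det_atkinLehnerMatrix, hE,
      mul_one]
    have hkm : ι P ^ (k - m) * ι P ^ m = ι P ^ k := by rw [← zpow_add₀ hι, sub_add_cancel]
    linear_combination
      (Fintype.card (Fin P.natDegree → Fq) * ι P ^ m * f 0) * (hk + 0 ^ (-k) * hkm)
  · rw [hU, slash_const_mul]
    beta_reduce
    rw [slash_atkinLehnerMatrix_slash_apply hE hf hι hz, ← mul_assoc,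
      neg_mul, ← zpow_add₀ hι]
    ring_nf

end AtkinLehner

end Newform

theorem newform_Up_Wp_comm_general {Fq Coo : Type} [Field Fq] [Fintype Fq] [Field Coo]
    (ι : Polynomial Fq →+* Coo) (k m : ℤ)
    (π P : Polynomial Fq)
    (hPirr : Irreducible P)
    (Wp : Matrix (Fin 2) (Fin 2) (Polynomial Fq))
    (hWp : IsAL (π * P) P Wp) (hWpdet : Wp.det = P)
    (f : Coo → Coo) (hf : IsWeakModular ι k m (π * P) f)
    (hTr : trMap ι k m P Wp f = 0) (hTrp : trTwP ι k m P Wp f = 0) :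
    slash ι k m Wp (heckeU ι k m P f) = (fun z => -(ι P ^ m) * f z) ∧
    heckeU ι k m P (slash ι k m Wp f) = (fun z => -(ι P ^ m) * f z) ∧
    slash ι k m Wp (heckeU ι k m P f) = heckeU ι k m P (slash ι k m Wp f) := by
  obtain ⟨a, b, c, d, rfl, hE⟩ := hWp.exists_eq_atkinLehnerMatrix hWpdet hPirr.ne_zero
  have hUW := heckeU_slash_of_trMap_eq_zero hTr
  have hWU : slash ι k m (atkinLehnerMatrix π P a b c d) (heckeU ι k m P f) =
      fun z => -(ι P ^ m) * f z := by
    by_cases hι : ι P = 0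
    · exact slash_atkinLehnerMatrix_heckeU_of_map_eq_zero ι k m hι hTr hTrp
    · exact slash_atkinLehnerMatrix_heckeU_of_map_ne_zero hE hf hι hPirr hTr hTrp
  exact ⟨hWU, hUW, hWU.trans hUW.symm⟩

/-- Proposition `ThmCommNew`: if `f` is a `p`-newform, i.e.
`Tr(f) = 0` and `Tr^{(p)}(f) = 0`, then
`U_p(f)|W_p = −P^m f = U_p(f|W_p)`; in particular `W_p^{mp}` and `U_p` commute
on the space of `p`-newforms. -/
theorem newform_Up_Wp_comm {Fq Coo : Type} [Field Fq] [Fintype Fq] [Field Coo]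
    (ι : Polynomial Fq →+* Coo) (k m : ℤ)
    (π P : Polynomial Fq)
    (hP : P.Monic) (hPirr : Irreducible P) (hcop : IsCoprime π P)
    (Wp : Matrix (Fin 2) (Fin 2) (Polynomial Fq))
    (hWp : IsAL (π * P) P Wp) (hWpdet : Wp.det = P)
    (f : Coo → Coo) (hf : IsWeakModular ι k m (π * P) f)
    (hTr : trMap ι k m P Wp f = 0) (hTrp : trTwP ι k m P Wp f = 0) :
    slash ι k m Wp (heckeU ι k m P f) = (fun z => -(ι P ^ m) * f z) ∧
    heckeU ι k m P (slash ι k m Wp f) = (fun z => -(ι P ^ m) * f z) ∧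
    slash ι k m Wp (heckeU ι k m P f) = heckeU ι k m P (slash ι k m Wp f) :=
  newform_Up_Wp_comm_general ι k m π P hPirr Wp hWp hWpdet f hf hTr hTrp
end
end

section
/- Let f ∈ S^{p-new} := Ker(Tr) ∩ Ker(Tr^{(p)}) ⊂ S_{k,m}(Γ0(mp)), f ≠ 0. Then f is an eigenvector for U_p if and only if f is an eigenvector for W_p^{mp}. Moreover, if U_p f = λ f then f|W_p^{mp} = −P^{m−k}λ·f, so the W_p-eigenvalue equals −P^{m−k} times the U_p-eigenvalue; and since (W_p^{mp})² = ζ P^{2m−k} (ζ ∈ F_q^×), the U_p-eigenvalue λ satisfies λ² = ζ^{-1} P^{k} up to the unit, i.e. the W_p-eigenvalue has p-adic valuation m − k/2. -/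
/-! `Tr^{(p)} f = 0` reads `f|W_p = -P^{m-k} U_p f`, which turns a `U_p`-eigenvector into a
`W_p`-eigenvector and, when `P^{m-k} ≠ 0`, back (if `P^{m-k} = 0` then `f|W_p = 0`, and
`Tr f = 0` forces `f = 0`). Substituting it into `Tr f = 0`, i.e. `f = -P^{-m} U_p(f|W_p)`,
gives `P^{-m} P^{m-k} λ² = 1`, whence `λ² = P^k`. -/

open Matrix

noncomputable section

section Slash

variable {Fq Coo : Type} [Field Fq] [Field Coo] (ι : Polynomial Fq →+* Coo) (k m : ℤ)

lemma slash_smul_s13 (M : Matrix (Fin 2) (Fin 2) (Polynomial Fq)) (c : Coo) (f : Coo → Coo) :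
    slash ι k m M (c • f) = c • slash ι k m M f := by
  funext z
  simp only [slash, Pi.smul_apply, smul_eq_mul]
  ring

lemma heckeU_smul [Fintype Fq] (P : Polynomial Fq) (c : Coo) (f : Coo → Coo) :
    heckeU ι k m P (c • f) = c • heckeU ι k m P f := by
  funext z
  simp only [heckeU, slash_smul_s13, Pi.smul_apply, smul_eq_mul, ← Finset.mul_sum]
  ring

lemma trMap_eq [Fintype Fq] (P : Polynomial Fq) (Wp : Matrix (Fin 2) (Fin 2) (Polynomial Fq))
    (f : Coo → Coo) :
    trMap ι k m P Wp f = f + ι P ^ (-m) • heckeU ι k m P (slash ι k m Wp f) :=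
  rfl

lemma trTwP_eq [Fintype Fq] (P : Polynomial Fq) (Wp : Matrix (Fin 2) (Fin 2) (Polynomial Fq))
    (f : Coo → Coo) :
    trTwP ι k m P Wp f = slash ι k m Wp f + ι P ^ (m - k) • heckeU ι k m P f :=
  rfl

end Slash

section TraceRelations

variable {K V : Type*} [Field K] [AddCommGroup V] [Module K V] {U W : V → V} {a b : K} {f : V}

lemma eq_smul_of_add_smul_eq_zero {l : K} (hTrp : W f + b • U f = 0) (hUf : U f = l • f) :
    W f = (-(b * l)) • f := by
  rw [eq_neg_of_add_eq_zero_left hTrp, hUf, smul_smul, neg_smul]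

lemma mul_mul_sq_eq_one_of_smul_eq (hU : ∀ (c : K) (v : V), U (c • v) = c • U v)
    (hTr : f + a • U (W f) = 0) (hTrp : W f + b • U f = 0) (hf0 : f ≠ 0) {l : K}
    (hUf : U f = l • f) : a * b * l ^ 2 = 1 := by
  have hfix : (1 - a * b * l ^ 2) • f = 0 := by
    rw [eq_smul_of_add_smul_eq_zero hTrp hUf, hU, hUf, smul_smul, smul_smul] at hTr
    rw [← hTr, sub_smul, one_smul, sub_eq_add_neg, ← neg_smul]
    congr 2
    ring
  exact (sub_eq_zero.mp ((smul_eq_zero.mp hfix).resolve_right hf0)).symm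

lemma exists_smul_eq_of_smul_eq (hU : ∀ (c : K) (v : V), U (c • v) = c • U v)
    (hTr : f + a • U (W f) = 0) (hTrp : W f + b • U f = 0) (hf0 : f ≠ 0) {μ : K}
    (hWf : W f = μ • f) : ∃ l : K, U f = l • f := by
  by_cases hb : b = 0
  · have hW0 : W f = 0 := by simpa [hb] using hTrp
    have hU0 : U 0 = 0 := by simpa using hU 0 0
    exact absurd (by simpa [hW0, hU0] using hTr) hf0
  · refine ⟨-(b⁻¹ * μ), ?_⟩
    rw [neg_smul, ← smul_smul, ← hWf, ← smul_neg, ← eq_neg_of_add_eq_zero_right hTrp,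
      smul_smul, inv_mul_cancel₀ hb, one_smul]

end TraceRelations

lemma eq_zpow_neg_add_of_zpow_mul_zpow_mul_eq_one {G₀ : Type*} [GroupWithZero G₀] {x y : G₀}
    {i j : ℤ} (h : x ^ i * x ^ j * y = 1) : y = x ^ (-(i + j)) := by
  have hij : x ^ i * x ^ j ≠ 0 := left_ne_zero_of_mul_eq_one h
  have hsplit : x ≠ 0 ∨ i + j ≠ 0 ∨ i = 0 ∧ j = 0 := by
    by_cases hx : x = 0
    · subst hx
      refine Or.inr (Or.inr ⟨?_, ?_⟩) <;> by_contra hn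
      · exact hij (by rw [_root_.zero_zpow i hn, zero_mul])
      · exact hij (by rw [_root_.zero_zpow j hn, mul_zero])
    · exact Or.inl hx
  rw [← zpow_add' hsplit] at h
  rw [_root_.zpow_neg]
  exact eq_inv_of_mul_eq_one_right h

theorem newform_eigenvector_Up_iff_Wp_general {Fq Coo : Type} [Field Fq] [Fintype Fq] [Field Coo]
    (ι : Polynomial Fq →+* Coo) (k m : ℤ)
    (P : Polynomial Fq)
    (Wp : Matrix (Fin 2) (Fin 2) (Polynomial Fq))
    (f : Coo → Coo) (hf0 : f ≠ 0)
    (hTr : trMap ι k m P Wp f = 0) (hTrp : trTwP ι k m P Wp f = 0) :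
    ((∃ l : Coo, heckeU ι k m P f = l • f) ↔ (∃ μ : Coo, slash ι k m Wp f = μ • f)) ∧
    (∀ l : Coo, heckeU ι k m P f = l • f →
      slash ι k m Wp f = (-(ι P ^ (m - k) * l)) • f) ∧
    (∀ l : Coo, heckeU ι k m P f = l • f → l ^ 2 = ι P ^ k) := by
  rw [trMap_eq] at hTr
  rw [trTwP_eq] at hTrp
  have hU := heckeU_smul ι k m P
  refine ⟨⟨fun ⟨l, hUf⟩ => ⟨_, eq_smul_of_add_smul_eq_zero hTrp hUf⟩,
    fun ⟨μ, hWf⟩ => exists_smul_eq_of_smul_eq hU hTr hTrp hf0 hWf⟩,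
    fun l hUf => eq_smul_of_add_smul_eq_zero hTrp hUf, fun l hUf => ?_⟩
  have hsq := eq_zpow_neg_add_of_zpow_mul_zpow_mul_eq_one
    (mul_mul_sq_eq_one_of_smul_eq hU hTr hTrp hf0 hUf)
  rwa [show -(-m + (m - k)) = k by ring] at hsq

/-- for a nonzero `p`-newform `f` (i.e. `Tr(f) = Tr^{(p)}(f) = 0`),
`f` is a `U_p`-eigenvector iff it is a `W_p^{mp}`-eigenvector; if `U_p f = l·f`
then `f|W_p = −P^{m−k} l · f`, and `l² = P^k` (with `W_p` normalized so that
`det W_p = P`, i.e. `(W_p)² = P^{2m−k}`, so the `W_p`-eigenvalue has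
`p`-adic valuation `m − k/2`). -/
theorem newform_eigenvector_Up_iff_Wp {Fq Coo : Type} [Field Fq] [Fintype Fq] [Field Coo]
    (ι : Polynomial Fq →+* Coo) (k m : ℤ)
    (π P : Polynomial Fq)
    (hP : P.Monic) (hPirr : Irreducible P) (hcop : IsCoprime π P)
    (Wp : Matrix (Fin 2) (Fin 2) (Polynomial Fq))
    (hWp : IsAL (π * P) P Wp) (hWpdet : Wp.det = P)
    (f : Coo → Coo) (hf : IsWeakModular ι k m (π * P) f) (hf0 : f ≠ 0)
    (hTr : trMap ι k m P Wp f = 0) (hTrp : trTwP ι k m P Wp f = 0) :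
    ((∃ l : Coo, heckeU ι k m P f = l • f) ↔ (∃ μ : Coo, slash ι k m Wp f = μ • f)) ∧
    (∀ l : Coo, heckeU ι k m P f = l • f →
      slash ι k m Wp f = (-(ι P ^ (m - k) * l)) • f) ∧
    (∀ l : Coo, heckeU ι k m P f = l • f → l ^ 2 = ι P ^ k) :=
  newform_eigenvector_Up_iff_Wp_general ι k m P Wp f hf0 hTr hTrp
end
end
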